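/- arXiv:1806.01438 — 4 statements merged into one kernel-verified Lean document; each statement's English description precedes it below -/
import Mathlib

section
/- The subgroup H̃(3) is contained in H(3), it is a normal subgroup of H(3), and the index of H̃(3) in H(3) divides 4. -/
noncomputable section

open Matrix Complex

/-- GL(3,ℂ): the group of invertible 3×3 complex matrices. -/
abbrev GL3 : Type := (Matrix (Fin 3) (Fin 3) ℂ)ˣ

/-- PGL(3,ℂ): the quotient of GL(3,ℂ) by its center. -/
abbrev PGL3 : Type := GL3 ⧸ Subgroup.center GL3

/-- The projection GL(3,ℂ) → PGL(3,ℂ). -/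
def pgl : GL3 →* PGL3 := QuotientGroup.mk' (Subgroup.center GL3)

/-- The class [M] ∈ PGL(3,ℂ) of an (invertible) matrix M. -/
noncomputable def cls (M : Matrix (Fin 3) (Fin 3) ℂ) : PGL3 := by
  classical exact if h : IsUnit M then pgl h.unit else 1

/-- The Hermitian matrix of signature (2,1) defining the Siegel model. -/
def Hform : Matrix (Fin 3) (Fin 3) ℂ := !![0,0,1; 0,1,0; 1,0,0]

lemma Hform_mul_Hform : Hform * Hform = 1 := by
  rw [Hform, Matrix.mul_fin_three, Matrix.one_fin_three]
  norm_num

/-- U(2,1,O): the subgroup of GL(3,ℂ) of matrices with entries in O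
satisfying Mᴴ H M = H, for O a subring of ℂ closed under conjugation. -/
def U21 (O : Subring ℂ) (hO : ∀ z ∈ O, (starRingEnd ℂ) z ∈ O) : Subgroup GL3 where
  carrier := {M : GL3 | (∀ i j, (M : Matrix (Fin 3) (Fin 3) ℂ) i j ∈ O) ∧
      (M : Matrix (Fin 3) (Fin 3) ℂ)ᴴ * Hform * (M : Matrix (Fin 3) (Fin 3) ℂ) = Hform}
  one_mem' := by
    constructor
    · intro i j
      by_cases h : i = j <;> simp [Matrix.one_apply, h, Subring.one_mem, Subring.zero_mem]
    · simp
  mul_mem' := by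
    rintro a b ⟨ha1, ha2⟩ ⟨hb1, hb2⟩
    constructor
    · intro i j
      rw [Units.val_mul, Matrix.mul_apply]
      exact Subring.sum_mem _ fun k _ => Subring.mul_mem _ (ha1 i k) (hb1 k j)
    · rw [Units.val_mul, Matrix.conjTranspose_mul]
      calc (↑b)ᴴ * (↑a)ᴴ * Hform * ((↑a : Matrix (Fin 3) (Fin 3) ℂ) * ↑b)
          = (↑b)ᴴ * ((↑a)ᴴ * Hform * ↑a) * ↑b := by simp only [mul_assoc]
        _ = (↑b)ᴴ * Hform * ↑b := by rw [ha2]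
        _ = Hform := hb2
  inv_mem' := by
    rintro a ⟨ha1, ha2⟩
    have hBA : (Hform * (a.val)ᴴ * Hform) * a.val = 1 := by
      calc (Hform * (a.val)ᴴ * Hform) * a.val
          = Hform * ((a.val)ᴴ * Hform * a.val) := by simp only [mul_assoc]
        _ = Hform * Hform := by rw [ha2]
        _ = 1 := Hform_mul_Hform
    have hInv : (a⁻¹).val = Hform * (a.val)ᴴ * Hform :=
      Units.inv_eq_of_mul_eq_one_left hBA
    have hab : a.val * (a⁻¹).val = 1 := a.mul_inv
    constructor
    · intro i j
      rw [hInv]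
      simp only [Matrix.mul_apply, Fin.sum_univ_three]
      fin_cases i <;> fin_cases j <;>
        simp [Hform, Matrix.conjTranspose_apply, Matrix.vecHead, Matrix.vecTail, Function.comp] <;>
        exact hO _ (ha1 _ _)
    · calc ((a⁻¹).val)ᴴ * Hform * (a⁻¹).val
          = ((a⁻¹).val)ᴴ * ((a.val)ᴴ * Hform * a.val) * (a⁻¹).val := by rw [ha2]
        _ = (a.val * (a⁻¹).val)ᴴ * Hform * (a.val * (a⁻¹).val) := by
            rw [Matrix.conjTranspose_mul]; simp only [mul_assoc]
        _ = Hform := by rw [hab]; simp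

/-- PU(2,1,O): the image of U(2,1,O) in PGL(3,ℂ). -/
def PU21 (O : Subring ℂ) (hO : ∀ z ∈ O, (starRingEnd ℂ) z ∈ O) : Subgroup PGL3 :=
  (U21 O hO).map pgl

lemma conjClosed (s : Set ℂ) (h : ∀ z ∈ s, (starRingEnd ℂ) z ∈ Subring.closure s) :
    ∀ z ∈ Subring.closure s, (starRingEnd ℂ) z ∈ Subring.closure s := by
  intro z hz
  have hle : Subring.closure s ≤ (Subring.closure s).comap (starRingEnd ℂ) :=
    Subring.closure_le.mpr fun x hx => Subring.mem_comap.mpr (h x hx)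
  exact Subring.mem_comap.mp (hle hz)


-- test ring pieces
section rings
open Matrix Complex

/-- ω = (−1+i√3)/2, a primitive cube root of unity. -/
def omega3 : ℂ := (-1 + Complex.I * (Real.sqrt 3 : ℝ)) / 2

/-- O₃ = ℤ[ω], the Eisenstein integers. -/
def O3 : Subring ℂ := Subring.closure {omega3}

lemma conj_omega3 : (starRingEnd ℂ) omega3 = -1 - omega3 := by
  rw [omega3]
  rw [map_div₀, map_add, _root_.map_mul, Complex.conj_I, Complex.conj_ofReal]
  rw [map_neg, _root_.map_one, _root_.map_ofNat]
  ring

lemma hO3 : ∀ z ∈ O3, (starRingEnd ℂ) z ∈ O3 := by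
  apply conjClosed
  intro z hz
  rw [Set.mem_singleton_iff] at hz
  subst hz
  rw [conj_omega3]
  exact sub_mem (neg_mem (Subring.one_mem _)) (Subring.subset_closure rfl)

/-- O₁ = ℤ[i], the Gaussian integers. -/
def O1 : Subring ℂ := Subring.closure {Complex.I}

lemma hO1 : ∀ z ∈ O1, (starRingEnd ℂ) z ∈ O1 := by
  apply conjClosed
  intro z hz
  rw [Set.mem_singleton_iff] at hz
  subst hz
  rw [Complex.conj_I]
  exact neg_mem (Subring.subset_closure rfl)

/-- τ = (1+i√7)/2. -/
def tau7 : ℂ := (1 + Complex.I * (Real.sqrt 7 : ℝ)) / 2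

/-- O₇ = ℤ[(1+i√7)/2], the ring of integers of ℚ(i√7). -/
def O7 : Subring ℂ := Subring.closure {tau7}

lemma conj_tau7 : (starRingEnd ℂ) tau7 = 1 - tau7 := by
  rw [tau7]
  rw [map_div₀, map_add, _root_.map_mul, Complex.conj_I, Complex.conj_ofReal]
  rw [_root_.map_one, _root_.map_ofNat]
  ring

lemma hO7 : ∀ z ∈ O7, (starRingEnd ℂ) z ∈ O7 := by
  apply conjClosed
  intro z hz
  rw [Set.mem_singleton_iff] at hz
  subst hz
  rw [conj_tau7]
  exact sub_mem (Subring.one_mem _) (Subring.subset_closure rfl)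

end rings

section matrices
open Matrix Complex

/-- The Cayley transform J. -/
def Jmat : Matrix (Fin 3) (Fin 3) ℂ := !![1,1,0; 0,1,-1; 1,1,-1]

-- d = 3 ------------------------------------------------------------------
def E1d3 : Matrix (Fin 3) (Fin 3) ℂ :=
  !![omega3^2, omega3^2 - 1, omega3 + 2;
     Complex.I * (Real.sqrt 3 : ℝ), 1 + Complex.I * (Real.sqrt 3 : ℝ), omega3^2 - 1;
     Complex.I * (Real.sqrt 3 : ℝ), Complex.I * (Real.sqrt 3 : ℝ), omega3^2]

def U1d3 : Matrix (Fin 3) (Fin 3) ℂ :=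
  !![1, 0, Complex.I * (Real.sqrt 3 : ℝ); 0, 1, 0; 0, 0, 1]

def U2d3 : Matrix (Fin 3) (Fin 3) ℂ :=
  !![1, 0, 0; 0, 1, 0; Complex.I * (Real.sqrt 3 : ℝ), 0, 1]

def I1d3 : Matrix (Fin 3) (Fin 3) ℂ := Jmat⁻¹ * !![-1,0,0; 0,1,0; 0,0,-1] * Jmat

def I2d3 : Matrix (Fin 3) (Fin 3) ℂ := Jmat⁻¹ * !![1,0,0; 0,-1,0; 0,0,-1] * Jmat

/-- The Falbel–Parker generators of PU(2,1,O₃). -/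
def Pd3 : Matrix (Fin 3) (Fin 3) ℂ := !![1, 1, omega3; 0, omega3, -omega3; 0, 0, 1]

def Qd3 : Matrix (Fin 3) (Fin 3) ℂ := !![1, 1, omega3; 0, -1, 1; 0, 0, 1]

def Rd3 : Matrix (Fin 3) (Fin 3) ℂ := !![0, 0, 1; 0, -1, 0; 1, 0, 0]

/-- The hybrid H(3). -/
def H3 : Subgroup PGL3 :=
  Subgroup.closure {cls E1d3, cls U1d3, cls U2d3, cls I1d3, cls I2d3}

/-- The hybrid H̃(3). -/
def Ht3 : Subgroup PGL3 := Subgroup.closure {cls E1d3, cls U1d3, cls U2d3}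

/-- The hybrid H'(3). -/
def H'3 : Subgroup PGL3 :=
  Subgroup.closure {cls (Pd3^2 * (Rd3 * Qd3^2) * (Pd3^2)⁻¹), cls (Qd3^2), cls (Rd3 * Qd3^2 * Rd3)}

/-- The Eisenstein–Picard modular group Γ(3) = PU(2,1,O₃). -/
def Gamma3 : Subgroup PGL3 := PU21 O3 hO3

-- d = 1 ------------------------------------------------------------------
def E1d1 : Matrix (Fin 3) (Fin 3) ℂ :=
  !![Complex.I, -1 + Complex.I, 1 - Complex.I;
     -2 * Complex.I, 1 - 2 * Complex.I, -1 + Complex.I;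
     -2 * Complex.I, -2 * Complex.I, Complex.I]

def U1d1 : Matrix (Fin 3) (Fin 3) ℂ := !![1, 0, Complex.I; 0, 1, 0; 0, 0, 1]

def E2d1 : Matrix (Fin 3) (Fin 3) ℂ :=
  !![Complex.I, 2 * Complex.I, -2 * Complex.I;
     1 - Complex.I, 1 - 2 * Complex.I, 2 * Complex.I;
     1 - Complex.I, 1 - Complex.I, Complex.I]

def U2d1 : Matrix (Fin 3) (Fin 3) ℂ := !![1, 0, 0; 0, 1, 0; Complex.I, 0, 1]

/-- The Falbel–Francsics–Parker generators of PU(2,1,O₁). -/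
def I0d1 : Matrix (Fin 3) (Fin 3) ℂ := !![0, 0, 1; 0, -1, 0; 1, 0, 0]

def Qd1 : Matrix (Fin 3) (Fin 3) ℂ :=
  !![1, 1 - Complex.I, -1; 0, -1, 1 + Complex.I; 0, 0, 1]

def Td1 : Matrix (Fin 3) (Fin 3) ℂ := !![1, 0, Complex.I; 0, 1, 0; 0, 0, 1]

def R1d1 : Matrix (Fin 3) (Fin 3) ℂ := Jmat⁻¹ * !![Complex.I,0,0; 0,1,0; 0,0,1] * Jmat

def R2d1 : Matrix (Fin 3) (Fin 3) ℂ := Jmat⁻¹ * !![1,0,0; 0,Complex.I,0; 0,0,1] * Jmat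

/-- The hybrid H(1). -/
def H1 : Subgroup PGL3 := Subgroup.closure {cls E1d1, cls U1d1, cls E2d1, cls U2d1}

/-- The hybrid H'(1). -/
def H'1 : Subgroup PGL3 := Subgroup.closure {cls R1d1, cls R2d1, cls U1d1, cls U2d1}

/-- The Gauss–Picard modular group Γ(1) = PU(2,1,O₁). -/
def Gamma1 : Subgroup PGL3 := PU21 O1 hO1

-- d = 7 ------------------------------------------------------------------
def U1d7 : Matrix (Fin 3) (Fin 3) ℂ :=
  !![1, 0, Complex.I * (Real.sqrt 7 : ℝ); 0, 1, 0; 0, 0, 1]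

def U2d7 : Matrix (Fin 3) (Fin 3) ℂ :=
  !![1, 0, 0; 0, 1, 0; Complex.I * (Real.sqrt 7 : ℝ), 0, 1]

def A1d7 : Matrix (Fin 3) (Fin 3) ℂ :=
  !![-(1/2) + Complex.I * (Real.sqrt 7 : ℝ) / 2, -(3/2) + Complex.I * (Real.sqrt 7 : ℝ) / 2,
       1/2 - Complex.I * (Real.sqrt 7 : ℝ) / 2;
     1, 2, -(3/2) + Complex.I * (Real.sqrt 7 : ℝ) / 2;
     1, 1, -(1/2) + Complex.I * (Real.sqrt 7 : ℝ) / 2]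

def B1d7 : Matrix (Fin 3) (Fin 3) ℂ := !![1, 0, 0; -2, -1, 0; -2, -2, 1]

def A2d7 : Matrix (Fin 3) (Fin 3) ℂ :=
  !![-(1/2) + Complex.I * (Real.sqrt 7 : ℝ) / 2, -1, 1;
     3/2 - Complex.I * (Real.sqrt 7 : ℝ) / 2, 2, -1;
     1/2 - Complex.I * (Real.sqrt 7 : ℝ) / 2, 3/2 - Complex.I * (Real.sqrt 7 : ℝ) / 2,
       -(1/2) + Complex.I * (Real.sqrt 7 : ℝ) / 2]

def B2d7 : Matrix (Fin 3) (Fin 3) ℂ := !![1, 2, -2; 0, -1, 2; 0, 0, 1]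

/-- The Mark–Paupert generators of PU(2,1,O₇). -/
def T1d7 : Matrix (Fin 3) (Fin 3) ℂ :=
  !![1, -1, -(1/2) + Complex.I * (Real.sqrt 7 : ℝ) / 2; 0, 1, 1; 0, 0, 1]

def Rd7 : Matrix (Fin 3) (Fin 3) ℂ := !![1, 0, 0; 0, -1, 0; 0, 0, 1]

def Id7 : Matrix (Fin 3) (Fin 3) ℂ := !![0, 0, 1; 0, -1, 0; 1, 0, 0]

/-- The hybrid H(7). -/
def H7 : Subgroup PGL3 :=
  Subgroup.closure {cls U1d7, cls U2d7, cls A1d7, cls A2d7, cls B1d7, cls B2d7}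

/-- The Picard modular group Γ(7) = PU(2,1,O₇). -/
def Gamma7 : Subgroup PGL3 := PU21 O7 hO7

end matrices

section presented
/-- The relators c², a⁶, aca⁻¹c⁻¹, (ab)³, (cab)³, b² in the free group on a,b,c
(a = of 0, b = of 1, c = of 2). -/
def relsG : Set (FreeGroup (Fin 3)) :=
  {(FreeGroup.of 2)^2, (FreeGroup.of 0)^6,
   FreeGroup.of 0 * FreeGroup.of 2 * (FreeGroup.of 0)⁻¹ * (FreeGroup.of 2)⁻¹,
   (FreeGroup.of 0 * FreeGroup.of 1)^3,
   (FreeGroup.of 2 * FreeGroup.of 0 * FreeGroup.of 1)^3,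
   (FreeGroup.of 1)^2}

/-- The presented group G = ⟨a,b,c | c², a⁶, [a,c], (ab)³, (cab)³, b²⟩. -/
abbrev Gpres := PresentedGroup relsG
end presented

/-!
`I₁` and `I₂` are the conjugates by `J` of two commuting diagonal sign matrices, so `[I₁]` and
`[I₂]` are commuting involutions. Conjugation by each of them sends `[E₁], [U₁], [U₂]` into
`H̃(3)`: it fixes all of them except `I₁ U₂ I₁ = ω • E₁ U₂⁻¹ E₁` and `I₂ U₁ I₂ = E₁⁻¹ U₁⁻¹ E₁⁻¹`
(recall `E₁³ = 1`). Hence `H(3) = ⟨[I₁], [I₂]⟩ ⊔ H̃(3)` normalizes `H̃(3)`, and the quotient is an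
image of the group `⟨[I₁], [I₂]⟩`, whose order divides `2 · 2`.
-/

namespace Subgroup

variable {G : Type*} [Group G]

theorem relIndex_sup_of_le_normalizer {K L : Subgroup G} (hL : L ≤ normalizer (K : Set G)) :
    K.relIndex (L ⊔ K) = K.relIndex L :=
  letI := normal_subgroupOf_of_le_normalizer hL
  letI := normal_subgroupOf_sup_of_le_normalizer hL
  Nat.card_congr (QuotientGroup.quotientInfEquivProdNormalizerQuotient L K hL).toEquiv.symm

theorem card_closure_pair_dvd_of_commute {x y : G} (hxy : Commute x y) :
    Nat.card (closure {x, y}) ∣ orderOf x * orderOf y := by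
  have hy : zpowers y ≤ normalizer (zpowers x : Set G) := by
    refine le_trans ?_ (centralizer_le_normalizer _)
    rw [zpowers_le, mem_centralizer_iff]
    rintro _ ⟨n, rfl⟩
    exact (hxy.zpow_left n).eq
  rw [Set.insert_eq, closure_union, ← zpowers_eq_closure, ← zpowers_eq_closure, sup_comm]
  calc Nat.card (zpowers y ⊔ zpowers x : Subgroup G)
      = Nat.card (zpowers x) * (zpowers x).relIndex (zpowers y ⊔ zpowers x) := by
        rw [← relIndex_bot_left, ← relIndex_bot_left,
          relIndex_mul_relIndex _ _ _ bot_le le_sup_right]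
    _ = orderOf x * (zpowers x).relIndex (zpowers y) := by
        rw [Nat.card_zpowers, relIndex_sup_of_le_normalizer hy]
    _ ∣ orderOf x * orderOf y :=
        mul_dvd_mul_left _ (Nat.card_zpowers y ▸ relIndex_dvd_card _ _)

theorem relIndex_sup_closure_pair_dvd_four {K : Subgroup G} {x y : G} (hx : x ^ 2 = 1)
    (hy : y ^ 2 = 1) (hxy : Commute x y) (hK : closure {x, y} ≤ normalizer (K : Set G)) :
    K.relIndex (closure {x, y} ⊔ K) ∣ 4 := by
  rw [relIndex_sup_of_le_normalizer hK]
  calc K.relIndex (closure {x, y}) ∣ Nat.card (closure {x, y}) := relIndex_dvd_card _ _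
    _ ∣ orderOf x * orderOf y := card_closure_pair_dvd_of_commute hxy
    _ ∣ 2 * 2 := mul_dvd_mul (orderOf_dvd_of_pow_eq_one hx) (orderOf_dvd_of_pow_eq_one hy)

theorem mem_normalizer_closure_of_sq_eq_one {S : Set G} {r : G} (hr : r ^ 2 = 1)
    (h : ∀ g ∈ S, r * g * r⁻¹ ∈ closure S) : r ∈ normalizer (closure S : Set G) := by
  have hconj : ∀ x ∈ closure S, r * x * r⁻¹ ∈ closure S := fun x hx =>
    (closure_le ((closure S).comap (MulAut.conj r).toMonoidHom)).mpr h hx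
  refine mem_normalizer_iff.mpr fun x => ⟨hconj x, fun hx => ?_⟩
  have hr' : r⁻¹ = r := inv_eq_of_mul_eq_one_right (by rw [← sq, hr])
  simpa [hr', ← mul_assoc, mul_assoc _ r r, ← sq, hr] using hconj _ hx

end Subgroup

theorem Matrix.transvection_mul_transvection_neg {n R : Type*} [Fintype n] [DecidableEq n]
    [CommRing R] {i j : n} (hij : i ≠ j) (c : R) :
    transvection i j c * transvection i j (-c) = 1 := by
  rw [transvection_mul_transvection_same _ _ hij, add_neg_cancel, transvection_zero]

section ProjectiveClass

variable {A B : Matrix (Fin 3) (Fin 3) ℂ}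

theorem cls_of_isUnit (hA : IsUnit A) : cls A = pgl hA.unit := dif_pos hA

theorem cls_one : cls 1 = 1 := by
  rw [cls_of_isUnit isUnit_one, ← map_one pgl]
  congr 1
  ext1
  simp

theorem cls_mul (hA : IsUnit A) (hB : IsUnit B) : cls (A * B) = cls A * cls B := by
  rw [cls_of_isUnit hA, cls_of_isUnit hB, cls_of_isUnit (hA.mul hB), ← map_mul]
  congr 1
  ext1
  simp

theorem isUnit_smul_one {c : ℂ} (hc : c ≠ 0) : IsUnit (c • 1 : Matrix (Fin 3) (Fin 3) ℂ) :=
  .of_mul_eq_one (c⁻¹ • 1) (by rw [smul_mul_smul, mul_one, mul_inv_cancel₀ hc, one_smul])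

theorem cls_smul_one {c : ℂ} (hc : c ≠ 0) : cls (c • 1) = 1 := by
  rw [cls_of_isUnit (isUnit_smul_one hc), pgl, QuotientGroup.mk'_apply, QuotientGroup.eq_one_iff,
    Subgroup.mem_center_iff]
  intro g
  ext1
  simp

theorem cls_smul {c : ℂ} (hc : c ≠ 0) (hA : IsUnit A) : cls (c • A) = cls A := by
  rw [← smul_one_mul, cls_mul (isUnit_smul_one hc) hA, cls_smul_one hc, one_mul]

theorem cls_eq_inv_of_mul_eq_one (h : A * B = 1) : cls B = (cls A)⁻¹ := by
  rw [eq_inv_iff_mul_eq_one, ← cls_mul (.of_mul_eq_one_right A h) (.of_mul_eq_one B h),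
    mul_eq_one_comm.mp h, cls_one]

theorem cls_sq_eq_one_of_mul_self_eq_one (hA : A * A = 1) : cls A ^ 2 = 1 := by
  rw [sq, ← cls_mul (.of_mul_eq_one A hA) (.of_mul_eq_one A hA), hA, cls_one]

theorem cls_conj_of_mul_self_eq_one (hA : A * A = 1) (hB : IsUnit B) :
    cls A * cls B * (cls A)⁻¹ = cls (A * B * A) := by
  have hA' : IsUnit A := .of_mul_eq_one A hA
  rw [← cls_eq_inv_of_mul_eq_one hA, cls_mul (hA'.mul hB) hA', cls_mul hA' hB]

theorem isUnit_transvection {i j : Fin 3} (hij : i ≠ j) (c : ℂ) : IsUnit (transvection i j c) :=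
  .of_mul_eq_one _ (transvection_mul_transvection_neg hij c)

theorem cls_transvection_neg {i j : Fin 3} (hij : i ≠ j) (c : ℂ) :
    cls (transvection i j (-c)) = (cls (transvection i j c))⁻¹ :=
  cls_eq_inv_of_mul_eq_one (transvection_mul_transvection_neg hij c)

end ProjectiveClass

section EisensteinMatrices

theorem omega3_sq_add_omega3_add_one : omega3 ^ 2 + omega3 + 1 = 0 := by
  have h : ((Real.sqrt 3 : ℝ) : ℂ) ^ 2 = 3 := by
    rw [← Complex.ofReal_pow, Real.sq_sqrt (by norm_num)]
    norm_num
  rw [omega3]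
  linear_combination (I ^ 2 / 4) * h + (3 / 4) * I_sq

theorem omega3_ne_zero : omega3 ≠ 0 := by
  intro h
  simpa [h] using omega3_sq_add_omega3_add_one

-- Rewriting `i√3` this way puts every entry in `ℤ[ω]`, where `grind` reduces modulo `ω² + ω + 1`.
theorem I_mul_sqrt_three : I * (Real.sqrt 3 : ℝ) = 2 * omega3 + 1 := by
  rw [omega3]
  ring

theorem Jmat_inv : Jmat⁻¹ = !![0, -1, 1; 1, 1, -1; 1, 0, -1] := by
  refine Matrix.inv_eq_right_inv ?_
  ext i j; fin_cases i <;> fin_cases j <;> simp [Jmat, Matrix.mul_apply, Fin.sum_univ_three]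

theorem I1d3_eq : I1d3 = !![-1, -2, 2; 0, 1, -2; 0, 0, -1] := by
  rw [I1d3, Jmat_inv]
  ext i j; fin_cases i <;> fin_cases j <;> simp [Jmat, Matrix.mul_apply, Fin.sum_univ_three] <;>
    norm_num

theorem I2d3_eq : I2d3 = !![-1, 0, 0; 2, 1, 0; 2, 2, -1] := by
  rw [I2d3, Jmat_inv]
  ext i j; fin_cases i <;> fin_cases j <;> simp [Jmat, Matrix.mul_apply, Fin.sum_univ_three] <;>
    norm_num

theorem transvection_zero_two (c : ℂ) :
    transvection (0 : Fin 3) 2 c = !![1, 0, c; 0, 1, 0; 0, 0, 1] := by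
  ext i j; fin_cases i <;> fin_cases j <;> simp [transvection]

theorem transvection_two_zero (c : ℂ) :
    transvection (2 : Fin 3) 0 c = !![1, 0, 0; 0, 1, 0; c, 0, 1] := by
  ext i j; fin_cases i <;> fin_cases j <;> simp [transvection]

theorem U1d3_eq_transvection : U1d3 = transvection 0 2 (I * (Real.sqrt 3 : ℝ)) := by
  rw [transvection_zero_two]
  rfl

theorem U2d3_eq_transvection : U2d3 = transvection 2 0 (I * (Real.sqrt 3 : ℝ)) := by
  rw [transvection_two_zero]
  rfl

theorem E1d3_pow_three : E1d3 ^ 3 = 1 := by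
  rw [pow_three]
  ext i j; fin_cases i <;> fin_cases j <;>
    simp [E1d3, I_mul_sqrt_three, Matrix.mul_apply, Fin.sum_univ_three] <;>
    grind [omega3_sq_add_omega3_add_one]

theorem I1d3_mul_self : I1d3 * I1d3 = 1 := by
  rw [I1d3_eq]
  simp only [Matrix.mul_fin_three, Matrix.one_fin_three]
  norm_num

theorem I2d3_mul_self : I2d3 * I2d3 = 1 := by
  rw [I2d3_eq]
  simp only [Matrix.mul_fin_three, Matrix.one_fin_three]
  norm_num

theorem I1d3_mul_I2d3 : I1d3 * I2d3 = I2d3 * I1d3 := by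
  rw [I1d3_eq, I2d3_eq]
  simp only [Matrix.mul_fin_three]
  norm_num

theorem I1d3_conj_E1d3 : I1d3 * E1d3 * I1d3 = E1d3 := by
  rw [I1d3_eq]
  ext i j; fin_cases i <;> fin_cases j <;>
    simp [E1d3, I_mul_sqrt_three, Matrix.mul_apply, Fin.sum_univ_three] <;>
    grind [omega3_sq_add_omega3_add_one]

theorem I1d3_conj_U1d3 : I1d3 * U1d3 * I1d3 = U1d3 := by
  rw [I1d3_eq]
  simp only [U1d3, Matrix.mul_fin_three]
  ring_nf

theorem I1d3_conj_U2d3 :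
    I1d3 * U2d3 * I1d3 = omega3 • (E1d3 * transvection 2 0 (-(I * (Real.sqrt 3 : ℝ))) * E1d3) := by
  rw [I1d3_eq, transvection_two_zero]
  simp only [U2d3, E1d3, I_mul_sqrt_three]
  ext i j; fin_cases i <;> fin_cases j <;> simp [Matrix.mul_apply, Fin.sum_univ_three] <;>
    grind [omega3_sq_add_omega3_add_one]

theorem I2d3_conj_E1d3 : I2d3 * E1d3 * I2d3 = E1d3 := by
  rw [I2d3_eq]
  ext i j; fin_cases i <;> fin_cases j <;>
    simp [E1d3, I_mul_sqrt_three, Matrix.mul_apply, Fin.sum_univ_three] <;>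
    grind [omega3_sq_add_omega3_add_one]

theorem I2d3_conj_U1d3 :
    I2d3 * U1d3 * I2d3 = E1d3 ^ 2 * transvection 0 2 (-(I * (Real.sqrt 3 : ℝ))) * E1d3 ^ 2 := by
  rw [I2d3_eq, sq, transvection_zero_two]
  simp only [U1d3, E1d3, I_mul_sqrt_three]
  ext i j; fin_cases i <;> fin_cases j <;> simp [Matrix.mul_apply, Fin.sum_univ_three] <;>
    grind [omega3_sq_add_omega3_add_one]

theorem I2d3_conj_U2d3 : I2d3 * U2d3 * I2d3 = U2d3 := by
  rw [I2d3_eq]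
  simp only [U2d3, Matrix.mul_fin_three]
  ring_nf

end EisensteinMatrices

section Hybrids

theorem isUnit_E1d3 : IsUnit E1d3 := .of_pow_eq_one E1d3_pow_three (by norm_num)

theorem isUnit_U1d3 : IsUnit U1d3 := U1d3_eq_transvection ▸ isUnit_transvection (by decide) _

theorem isUnit_U2d3 : IsUnit U2d3 := U2d3_eq_transvection ▸ isUnit_transvection (by decide) _

theorem cls_E1d3_mem_Ht3 : cls E1d3 ∈ Ht3 := Subgroup.subset_closure (by simp)

theorem cls_U1d3_mem_Ht3 : cls U1d3 ∈ Ht3 := Subgroup.subset_closure (by simp)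

theorem cls_U2d3_mem_Ht3 : cls U2d3 ∈ Ht3 := Subgroup.subset_closure (by simp)

theorem cls_I1d3_mem_normalizer_Ht3 : cls I1d3 ∈ Subgroup.normalizer (Ht3 : Set PGL3) := by
  refine Subgroup.mem_normalizer_closure_of_sq_eq_one
    (cls_sq_eq_one_of_mul_self_eq_one I1d3_mul_self) ?_
  rintro _ (rfl | rfl | rfl)
  · rw [cls_conj_of_mul_self_eq_one I1d3_mul_self isUnit_E1d3, I1d3_conj_E1d3]
    exact cls_E1d3_mem_Ht3
  · rw [cls_conj_of_mul_self_eq_one I1d3_mul_self isUnit_U1d3, I1d3_conj_U1d3]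
    exact cls_U1d3_mem_Ht3
  · have hT := isUnit_transvection (i := 2) (j := 0) (by decide) (-(I * (Real.sqrt 3 : ℝ)))
    rw [cls_conj_of_mul_self_eq_one I1d3_mul_self isUnit_U2d3, I1d3_conj_U2d3,
      cls_smul omega3_ne_zero ((isUnit_E1d3.mul hT).mul isUnit_E1d3),
      cls_mul (isUnit_E1d3.mul hT) isUnit_E1d3, cls_mul isUnit_E1d3 hT,
      cls_transvection_neg (by decide), ← U2d3_eq_transvection]
    exact mul_mem (mul_mem cls_E1d3_mem_Ht3 (inv_mem cls_U2d3_mem_Ht3)) cls_E1d3_mem_Ht3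

theorem cls_I2d3_mem_normalizer_Ht3 : cls I2d3 ∈ Subgroup.normalizer (Ht3 : Set PGL3) := by
  refine Subgroup.mem_normalizer_closure_of_sq_eq_one
    (cls_sq_eq_one_of_mul_self_eq_one I2d3_mul_self) ?_
  rintro _ (rfl | rfl | rfl)
  · rw [cls_conj_of_mul_self_eq_one I2d3_mul_self isUnit_E1d3, I2d3_conj_E1d3]
    exact cls_E1d3_mem_Ht3
  · have hT := isUnit_transvection (i := 0) (j := 2) (by decide) (-(I * (Real.sqrt 3 : ℝ)))
    have hE2 := isUnit_E1d3.pow 2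
    rw [cls_conj_of_mul_self_eq_one I2d3_mul_self isUnit_U1d3, I2d3_conj_U1d3,
      cls_mul (hE2.mul hT) hE2, cls_mul hE2 hT, cls_transvection_neg (by decide),
      ← U1d3_eq_transvection, sq, cls_mul isUnit_E1d3 isUnit_E1d3]
    have hE := cls_E1d3_mem_Ht3
    exact mul_mem (mul_mem (mul_mem hE hE) (inv_mem cls_U1d3_mem_Ht3)) (mul_mem hE hE)
  · rw [cls_conj_of_mul_self_eq_one I2d3_mul_self isUnit_U2d3, I2d3_conj_U2d3]
    exact cls_U2d3_mem_Ht3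

theorem commute_cls_I1d3_cls_I2d3 : Commute (cls I1d3) (cls I2d3) := by
  have h1 : IsUnit I1d3 := .of_mul_eq_one _ I1d3_mul_self
  have h2 : IsUnit I2d3 := .of_mul_eq_one _ I2d3_mul_self
  rw [Commute, SemiconjBy, ← cls_mul h1 h2, ← cls_mul h2 h1, I1d3_mul_I2d3]

theorem H3_eq_closure_sup_Ht3 : H3 = Subgroup.closure {cls I1d3, cls I2d3} ⊔ Ht3 := by
  rw [H3, Ht3, ← Subgroup.closure_union]
  congr 1
  ext
  simp only [Set.mem_insert_iff, Set.mem_singleton_iff, Set.mem_union]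
  tauto

end Hybrids

/-- H̃(3) is contained in H(3), is normal in H(3), and its index in H(3)
divides 4. -/
theorem stmt1 : Ht3 ≤ H3 ∧ (Ht3.subgroupOf H3).Normal ∧ Ht3.relIndex H3 ∣ 4 := by
  have hL : Subgroup.closure {cls I1d3, cls I2d3} ≤ Subgroup.normalizer (Ht3 : Set PGL3) := by
    rw [Subgroup.closure_le]
    rintro _ (rfl | rfl)
    exacts [cls_I1d3_mem_normalizer_Ht3, cls_I2d3_mem_normalizer_Ht3]
  rw [H3_eq_closure_sup_Ht3]
  exact ⟨le_sup_right, Subgroup.normal_subgroupOf_sup_of_le_normalizer hL,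
    Subgroup.relIndex_sup_closure_pair_dvd_four (cls_sq_eq_one_of_mul_self_eq_one I1d3_mul_self)
      (cls_sq_eq_one_of_mul_self_eq_one I2d3_mul_self) commute_cls_I1d3_cls_I2d3 hL⟩
end
end

section
/- The presented group G = ⟨a, b, c | c² = 1, a⁶ = 1, aca⁻¹c⁻¹ = 1, (ab)³ = 1, (cab)³ = 1, b² = 1⟩ is an infinite group. -/
noncomputable section

open Matrix Complex

section infiniteProof

def Am : Matrix (Fin 3) (Fin 3) ℂ := !![1,-1,0; 1,0,0; 0,0,1]
def AmInv : Matrix (Fin 3) (Fin 3) ℂ := !![0,1,0; -1,1,0; 0,0,1]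
def Bm : Matrix (Fin 3) (Fin 3) ℂ := !![-1,0,1; 0,-1,0; 0,0,1]

lemma AmMulInv : Am * AmInv = 1 := by
  rw [Am, AmInv, Matrix.mul_fin_three, Matrix.one_fin_three]; norm_num

lemma AmInvMul : AmInv * Am = 1 := by
  rw [Am, AmInv, Matrix.mul_fin_three, Matrix.one_fin_three]; norm_num

lemma BmMul : Bm * Bm = 1 := by
  rw [Bm, Matrix.mul_fin_three, Matrix.one_fin_three]; norm_num

def Aunit : GL3 := ⟨Am, AmInv, AmMulInv, AmInvMul⟩
def Bunit : GL3 := ⟨Bm, Bm, BmMul, BmMul⟩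

lemma pow6 {M : Matrix (Fin 3) (Fin 3) ℂ} : M^6 = M*M*M*M*M*M := by
  rw [pow_succ, pow_succ, pow_succ, pow_succ, pow_succ, pow_one]

lemma pow3 {M : Matrix (Fin 3) (Fin 3) ℂ} : M^3 = M*M*M := by
  rw [pow_succ, pow_succ, pow_one]

lemma Am6 : Am^6 = 1 := by
  rw [pow6, Am]
  simp only [Matrix.mul_fin_three]
  rw [Matrix.one_fin_three]; norm_num

lemma ABm3 : (Am * Bm)^3 = 1 := by
  rw [pow3, Am, Bm]
  simp only [Matrix.mul_fin_three]
  rw [Matrix.one_fin_three]; norm_num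

def fgen : Fin 3 → GL3
  | 0 => Aunit
  | 1 => Bunit
  | 2 => 1

lemma ABunit3 : (Aunit * Bunit)^3 = 1 := by
  refine Units.ext ?_
  rw [Units.val_pow_eq_pow_val, Units.val_mul]
  exact ABm3

lemma rels_hold : ∀ r ∈ relsG, FreeGroup.lift fgen r = 1 := by
  intro r hr
  simp only [relsG, Set.mem_insert_iff, Set.mem_singleton_iff] at hr
  rcases hr with rfl|rfl|rfl|rfl|rfl|rfl
  · rw [map_pow, FreeGroup.lift_apply_of]; show (1:GL3)^2 = 1; rw [one_pow]
  · rw [map_pow, FreeGroup.lift_apply_of]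
    show Aunit^6 = 1
    refine Units.ext ?_
    rw [Units.val_pow_eq_pow_val]
    exact Am6
  · rw [_root_.map_mul, _root_.map_mul, _root_.map_mul, map_inv, map_inv,
      FreeGroup.lift_apply_of, FreeGroup.lift_apply_of]
    show Aunit * 1 * Aunit⁻¹ * (1:GL3)⁻¹ = 1
    rw [mul_one, mul_inv_cancel, inv_one, mul_one]
  · rw [map_pow, _root_.map_mul, FreeGroup.lift_apply_of, FreeGroup.lift_apply_of]
    exact ABunit3
  · rw [map_pow, _root_.map_mul, _root_.map_mul, FreeGroup.lift_apply_of,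
      FreeGroup.lift_apply_of, FreeGroup.lift_apply_of]
    show ((1:GL3) * Aunit * Bunit)^3 = 1
    rw [one_mul]; exact ABunit3
  · rw [map_pow, FreeGroup.lift_apply_of]
    show Bunit^2 = 1
    refine Units.ext ?_
    rw [Units.val_pow_eq_pow_val, pow_two]
    exact BmMul

def phiG : Gpres →* GL3 := PresentedGroup.toGroup rels_hold

def Tm : Matrix (Fin 3) (Fin 3) ℂ := !![1,0,-1; 0,1,0; 0,0,1]

lemma Am3Bm : Am^3 * Bm = Tm := by
  rw [pow3, Am, Bm]
  simp only [Matrix.mul_fin_three]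
  rw [Tm]; norm_num

lemma Tm_pow (n : ℕ) : Tm^n = !![1,0,-(n:ℂ); 0,1,0; 0,0,1] := by
  induction n with
  | zero => simp [Matrix.one_fin_three]
  | succ n ih =>
    rw [pow_succ, ih, Tm, Matrix.mul_fin_three]
    push_cast
    norm_num

def xG : Gpres := (PresentedGroup.of 0)^3 * PresentedGroup.of 1

lemma phi_x_val : ((phiG xG : GL3) : Matrix (Fin 3) (Fin 3) ℂ) = Tm := by
  have : phiG xG = Aunit^3 * Bunit := by
    rw [xG, _root_.map_mul, map_pow, phiG, PresentedGroup.toGroup.of, PresentedGroup.toGroup.of]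
    rfl
  rw [this, Units.val_mul, Units.val_pow_eq_pow_val]
  exact Am3Bm


end infiniteProof

/-- the presented group G = ⟨a,b,c | c², a⁶, aca⁻¹c⁻¹, (ab)³, (cab)³, b²⟩
is infinite. -/
theorem stmt4 : Infinite Gpres := by
  refine Infinite.of_injective (fun n : ℕ => xG^n) ?_
  intro m n h
  have h' : xG^m = xG^n := h
  have h2 : ((phiG (xG^m) : GL3) : Matrix (Fin 3) (Fin 3) ℂ) 0 2
      = ((phiG (xG^n) : GL3) : Matrix (Fin 3) (Fin 3) ℂ) 0 2 := by rw [h']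
  rw [map_pow, map_pow, Units.val_pow_eq_pow_val, Units.val_pow_eq_pow_val, phi_x_val,
    Tm_pow, Tm_pow] at h2
  simp at h2
  exact_mod_cast h2



end
end

section
/- Let G be a group and K a subgroup of G of finite index. If the abelianization of K is finite, then the abelianization of G is finite. -/
noncomputable section

open Matrix Complex

/-- if K ≤ G has finite index and finite abelianization, then G has
finite abelianization. -/
theorem stmt10 {G : Type*} [Group G] (K : Subgroup G)
    (hindex : Finite (G ⧸ K)) (hab : Finite (Abelianization ↥K)) :
    Finite (Abelianization G) := by
  classical
  set f : G →* Abelianization G := Abelianization.of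
  set H : Subgroup (Abelianization G) := K.map f with hH
  -- H is finite: it is the image of Abelianization K
  have hcomm : ∀ x y : ↥K, (f.comp K.subtype) x * (f.comp K.subtype) y
      = (f.comp K.subtype) y * (f.comp K.subtype) x := fun x y => mul_comm _ _
  let g : Abelianization ↥K →* Abelianization G := Abelianization.lift
    { toFun := fun x => f (K.subtype x)
      map_one' := by simp
      map_mul' := fun x y => by simp }
  have hrange : (H : Set (Abelianization G)) = Set.range g := by
    ext x
    constructor
    · rintro ⟨y, hy, rfl⟩
      exact ⟨Abelianization.of ⟨y, hy⟩, rfl⟩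
    · rintro ⟨y, rfl⟩
      refine QuotientGroup.induction_on y fun z => ⟨z, z.2, rfl⟩
  have hHfin : Finite H :=
    Set.Finite.to_subtype (hrange ▸ Set.finite_range g)
  -- H has finite index
  have hKind : K.index ≠ 0 := K.index_ne_zero_of_finite
  have hdvd : H.index ∣ K.index := K.index_map_dvd (fun x => QuotientGroup.induction_on x fun z => ⟨z, rfl⟩)
  have hHind : H.index ≠ 0 := fun h0 =>
    hKind (Nat.eq_zero_of_zero_dvd (h0 ▸ hdvd))
  have hcard : Nat.card (Abelianization G) ≠ 0 := by
    rw [← H.index_mul_card]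
    exact Nat.mul_ne_zero hHind (Nat.card_pos.ne')
  exact Nat.finite_of_card_ne_zero hcard

end
end

section
/- In PGL(3,ℂ) the following identities hold: [U₁] = [T], [U₂] = [I₀][T][I₀], [E₁] = [T]⁻¹[Q]([I₀][T])³[I₀]([T]([I₀][T])⁻³[Q])²[I₀], and [E₂] = [I₀][E₁][I₀]. -/
noncomputable section

open Matrix Complex

section stmt13aux
open Matrix Complex

lemma cls_val (u : GL3) : cls (u : Matrix (Fin 3) (Fin 3) ℂ) = pgl u := by
  rw [cls, dif_pos u.isUnit]
  congr 1
  exact Units.ext rfl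

def uI0 : GL3 :=
  ⟨I0d1, I0d1,
    (by
      simp only [I0d1, Matrix.mul_fin_three]
      rw [Matrix.one_fin_three]
      ext i j
      fin_cases i <;> fin_cases j <;> norm_num [Complex.ext_iff]),
    (by
      simp only [I0d1, Matrix.mul_fin_three]
      rw [Matrix.one_fin_three]
      ext i j
      fin_cases i <;> fin_cases j <;> norm_num [Complex.ext_iff])⟩

def uT : GL3 :=
  ⟨Td1, !![1,0,-Complex.I; 0,1,0; 0,0,1],
    (by
      simp only [Td1, Matrix.mul_fin_three]
      rw [Matrix.one_fin_three]
      ext i j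
      fin_cases i <;> fin_cases j <;> norm_num [Complex.ext_iff]),
    (by
      simp only [Td1, Matrix.mul_fin_three]
      rw [Matrix.one_fin_three]
      ext i j
      fin_cases i <;> fin_cases j <;> norm_num [Complex.ext_iff])⟩

def uQ : GL3 :=
  ⟨Qd1, Qd1,
    (by
      simp only [Qd1, Matrix.mul_fin_three]
      rw [Matrix.one_fin_three]
      ext i j
      fin_cases i <;> fin_cases j <;> norm_num [Complex.ext_iff]),
    (by
      simp only [Qd1, Matrix.mul_fin_three]
      rw [Matrix.one_fin_three]
      ext i j
      fin_cases i <;> fin_cases j <;> norm_num [Complex.ext_iff])⟩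

def E1d1inv : Matrix (Fin 3) (Fin 3) ℂ :=
  !![-Complex.I, -1 - Complex.I, 1 + Complex.I;
     2 * Complex.I, 1 + 2 * Complex.I, -1 - Complex.I;
     2 * Complex.I, 2 * Complex.I, -Complex.I]

def uE1 : GL3 :=
  ⟨E1d1, E1d1inv,
    (by
      simp only [E1d1, E1d1inv, Matrix.mul_fin_three]
      rw [Matrix.one_fin_three]
      ext i j
      fin_cases i <;> fin_cases j <;> norm_num [Complex.ext_iff]),
    (by
      simp only [E1d1, E1d1inv, Matrix.mul_fin_three]
      rw [Matrix.one_fin_three]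
      ext i j
      fin_cases i <;> fin_cases j <;> norm_num [Complex.ext_iff])⟩

lemma uI0_val : ((uI0 : GL3) : Matrix (Fin 3) (Fin 3) ℂ) = I0d1 := rfl
lemma uT_val : ((uT : GL3) : Matrix (Fin 3) (Fin 3) ℂ) = Td1 := rfl
lemma uQ_val : ((uQ : GL3) : Matrix (Fin 3) (Fin 3) ℂ) = Qd1 := rfl
lemma uE1_val : ((uE1 : GL3) : Matrix (Fin 3) (Fin 3) ℂ) = E1d1 := rfl
lemma uI0inv_val : ((uI0⁻¹ : GL3) : Matrix (Fin 3) (Fin 3) ℂ) = I0d1 := rfl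
lemma uTinv_val : ((uT⁻¹ : GL3) : Matrix (Fin 3) (Fin 3) ℂ) = !![1,0,-Complex.I; 0,1,0; 0,0,1] := rfl

lemma cls_I0 : cls I0d1 = pgl uI0 := cls_val uI0
lemma cls_T : cls Td1 = pgl uT := cls_val uT
lemma cls_Q : cls Qd1 = pgl uQ := cls_val uQ
lemma cls_E1 : cls E1d1 = pgl uE1 := cls_val uE1

lemma pgl_neg_one : pgl (-1 : GL3) = 1 := by
  rw [pgl, QuotientGroup.mk'_apply, QuotientGroup.eq_one_iff]
  exact Subgroup.mem_center_iff.mpr fun g => by rw [mul_neg_one, neg_one_mul]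

lemma pgl_neg (u : GL3) : pgl (-u) = pgl u := by
  rw [show -u = (-1) * u from by rw [neg_one_mul], _root_.map_mul, pgl_neg_one, one_mul]

end stmt13aux

set_option maxHeartbeats 2000000 in
/-- [U₁] = [T], [U₂] = [I₀][T][I₀],
[E₁] = [T]⁻¹[Q]([I₀][T])³[I₀]([T]([I₀][T])⁻³[Q])²[I₀], [E₂] = [I₀][E₁][I₀]. -/
theorem stmt13 :
    cls U1d1 = cls Td1 ∧
    cls U2d1 = cls I0d1 * cls Td1 * cls I0d1 ∧
    cls E1d1 = (cls Td1)⁻¹ * cls Qd1 * (cls I0d1 * cls Td1)^3 * cls I0d1 *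
      (cls Td1 * ((cls I0d1 * cls Td1)^3)⁻¹ * cls Qd1)^2 * cls I0d1 ∧
    cls E2d1 = cls I0d1 * cls E1d1 * cls I0d1 := by
  refine ⟨rfl, ?_, ?_, ?_⟩
  · rw [cls_T, cls_I0, ← _root_.map_mul, ← _root_.map_mul]
    have h : U2d1 = ((uI0 * uT * uI0 : GL3) : Matrix (Fin 3) (Fin 3) ℂ) := by
      simp only [Units.val_mul, uI0_val, uT_val, U2d1, I0d1, Td1, Matrix.mul_fin_three]
      ext i j
      fin_cases i <;> fin_cases j <;> norm_num [Complex.ext_iff]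
    rw [h, cls_val]
  · rw [cls_T, cls_I0, cls_Q, cls_E1]
    simp only [← _root_.map_mul, ← map_pow, ← map_inv]
    set W : GL3 := uT⁻¹ * uQ * (uI0 * uT) ^ 3 * uI0 *
      (uT * ((uI0 * uT) ^ 3)⁻¹ * uQ) ^ 2 * uI0 with hWdef
    have hW' : W = uT⁻¹ * uQ * (uI0 * uT) ^ 3 * uI0 *
        (uT * (uT⁻¹ * uI0⁻¹) ^ 3 * uQ) ^ 2 * uI0 := by
      rw [hWdef, ← inv_pow, _root_.mul_inv_rev]
    have hval : ((W : GL3) : Matrix (Fin 3) (Fin 3) ℂ) = -E1d1 := by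
      rw [hW']
      simp only [Units.val_mul, Units.val_pow_eq_pow_val, uI0_val, uT_val, uQ_val,
        uTinv_val, uI0inv_val]
      simp only [Qd1, I0d1, Td1, E1d1, pow_succ, pow_zero, one_mul, Matrix.mul_fin_three]
      ext i j
      fin_cases i <;> fin_cases j <;> norm_num [Complex.ext_iff]
    have huE1 : uE1 = (-1) * W := by
      apply Units.ext
      rw [Units.val_mul, hval, uE1_val, Units.val_neg, Units.val_one, neg_one_mul, neg_neg]
    rw [huE1, _root_.map_mul, pgl_neg_one, one_mul]
  · rw [cls_E1, cls_I0, ← _root_.map_mul, ← _root_.map_mul]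
    have h : E2d1 = ((uI0 * uE1 * uI0 : GL3) : Matrix (Fin 3) (Fin 3) ℂ) := by
      simp only [Units.val_mul, uI0_val, uE1_val, E2d1, I0d1, E1d1, Matrix.mul_fin_three]
      ext i j
      fin_cases i <;> fin_cases j <;> norm_num [Complex.ext_iff]
    rw [h, cls_val]


end
end
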